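/- For the LDP-FL quantizer with parameters c ∈ ℝ, r > 0, ε > 0: for every w ∈ [c−r, c+r], E[Q(w)] = w and E[(Q(w) − w)²] = r²·α(ε)² − (w−c)²; consequently r²(α(ε)² − 1) ≤ Var(Q(w)) ≤ r²·α(ε)². -/
import Mathlib


open Real Set

/-- `α(ε) = (e^ε + 1)/(e^ε − 1)`. -/
noncomputable def alphaFn (ε : ℝ) : ℝ := (Real.exp ε + 1) / (Real.exp ε - 1)

/-- `P(Q(w) = c + r·α(ε))` for the LDP-FL quantizer. -/
noncomputable def qPlus (c r ε w : ℝ) : ℝ := 1 / 2 + (w - c) / (2 * r * alphaFn ε)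

/-- `P(Q(w) = c − r·α(ε))` for the LDP-FL quantizer. -/
noncomputable def qMinus (c r ε w : ℝ) : ℝ := 1 / 2 - (w - c) / (2 * r * alphaFn ε)

/-- the LDP-FL quantizer is unbiased, its mean squared error at `w` equals
`r²α(ε)² − (w−c)²`, and hence its variance is bounded between `r²(α(ε)² − 1)` and `r²α(ε)²`. -/
theorem stmt2 (c r ε w : ℝ) (hr : 0 < r) (hε : 0 < ε)
    (hw : w ∈ Icc (c - r) (c + r)) :
    qPlus c r ε w * (c + r * alphaFn ε) + qMinus c r ε w * (c - r * alphaFn ε) = w ∧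
    qPlus c r ε w * ((c + r * alphaFn ε) - w) ^ 2 +
        qMinus c r ε w * ((c - r * alphaFn ε) - w) ^ 2 =
      r ^ 2 * alphaFn ε ^ 2 - (w - c) ^ 2 ∧
    r ^ 2 * (alphaFn ε ^ 2 - 1) ≤
      qPlus c r ε w * ((c + r * alphaFn ε) - w) ^ 2 +
        qMinus c r ε w * ((c - r * alphaFn ε) - w) ^ 2 ∧
    qPlus c r ε w * ((c + r * alphaFn ε) - w) ^ 2 +
        qMinus c r ε w * ((c - r * alphaFn ε) - w) ^ 2 ≤
      r ^ 2 * alphaFn ε ^ 2 := by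
  have h1 : 1 < Real.exp ε := by
    have := Real.exp_lt_exp.mpr hε; simpa using this
  have hA : 0 < alphaFn ε := by
    unfold alphaFn
    apply div_pos <;> linarith
  have hAne : alphaFn ε ≠ 0 := ne_of_gt hA
  obtain ⟨hw1, hw2⟩ := hw
  have hsq : (w - c) ^ 2 ≤ r ^ 2 := by nlinarith
  have hmean : qPlus c r ε w * (c + r * alphaFn ε) + qMinus c r ε w * (c - r * alphaFn ε) = w := by
    unfold qPlus qMinus
    field_simp
    ring
  have hmse : qPlus c r ε w * ((c + r * alphaFn ε) - w) ^ 2 +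
      qMinus c r ε w * ((c - r * alphaFn ε) - w) ^ 2 =
      r ^ 2 * alphaFn ε ^ 2 - (w - c) ^ 2 := by
    unfold qPlus qMinus
    field_simp
    ring
  refine ⟨hmean, hmse, ?_, ?_⟩ <;> rw [hmse] <;> nlinarith
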